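/- arXiv:1202.6483 — 3 statements merged into one kernel-verified Lean document; each statement's English description precedes it below -/
import Mathlib

section
/- For all real x and every κ ≥ 1, Q(x) ≥ (e^{1/(π(κ-1)+2)} / (2κ)) · sqrt((κ-1)(π(κ-1)+2)/π) · e^{-κx²/2}, where Q(x) = (1/√(2π)) ∫_x^∞ e^{-t²/2} dt is the Gaussian Q-function. -/
open Real MeasureTheory

noncomputable def Qfun (x : ℝ) : ℝ :=
  (1 / Real.sqrt (2 * Real.pi)) * ∫ t in Set.Ioi x, Real.exp (-(t ^ 2) / 2)

open Filter Set

namespace QAux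

noncomputable def gauss (t : ℝ) : ℝ := Real.exp (-(t ^ 2) / 2)

lemma integrable_gauss : Integrable gauss := by
  have h := integrable_exp_neg_mul_sq (b := (1:ℝ)/2) (by norm_num)
  convert h using 2 with t
  unfold gauss; ring_nf

lemma cont_gauss : Continuous gauss := by
  unfold gauss; continuity

lemma gauss_pos (t : ℝ) : 0 < gauss t := Real.exp_pos _

lemma Ioi_eq (y : ℝ) : (∫ t in Set.Ioi y, gauss t)
    = (∫ t in Set.Ioi (0:ℝ), gauss t) - ∫ t in (0:ℝ)..y, gauss t := by
  have h1 := intervalIntegral.integral_Iic_add_Ioi (b := y)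
    integrable_gauss.integrableOn integrable_gauss.integrableOn
  have h2 := intervalIntegral.integral_Iic_add_Ioi (b := (0:ℝ))
    integrable_gauss.integrableOn integrable_gauss.integrableOn
  have h3 := intervalIntegral.integral_Iic_sub_Iic (a := (0:ℝ)) (b := y)
    integrable_gauss.integrableOn integrable_gauss.integrableOn
  linarith

lemma Qfun_eq (y : ℝ) : Qfun y = (1 / Real.sqrt (2 * Real.pi)) *
    ((∫ t in Set.Ioi (0:ℝ), gauss t) - ∫ t in (0:ℝ)..y, gauss t) := by
  rw [Qfun, ← Ioi_eq]; rfl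

lemma hasDerivAt_Qfun (x : ℝ) :
    HasDerivAt Qfun (-((1 / Real.sqrt (2 * Real.pi)) * gauss x)) x := by
  have hd : HasDerivAt (fun y => ∫ t in (0:ℝ)..y, gauss t) (gauss x) x := by
    exact intervalIntegral.integral_hasDerivAt_right
      integrable_gauss.intervalIntegrable
      (cont_gauss.stronglyMeasurableAtFilter _ _)
      cont_gauss.continuousAt
  have : HasDerivAt (fun y => (1 / Real.sqrt (2 * Real.pi)) *
      ((∫ t in Set.Ioi (0:ℝ), gauss t) - ∫ t in (0:ℝ)..y, gauss t))
      ((1 / Real.sqrt (2 * Real.pi)) * (0 - gauss x)) x :=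
    ((hasDerivAt_const x _).sub hd).const_mul _
  have h2 : Qfun = fun y => (1 / Real.sqrt (2 * Real.pi)) *
      ((∫ t in Set.Ioi (0:ℝ), gauss t) - ∫ t in (0:ℝ)..y, gauss t) := by
    funext y; exact Qfun_eq y
  rw [h2]
  convert this using 1; ring

lemma integral_gauss_Ioi_zero : (∫ t in Set.Ioi (0:ℝ), gauss t) = Real.sqrt (2*Real.pi) / 2 := by
  have h := integral_gaussian_Ioi ((1:ℝ)/2)
  have : (∫ t in Set.Ioi (0:ℝ), gauss t) = ∫ x in Set.Ioi (0:ℝ), Real.exp (-(1/2) * x ^ 2) := by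
    congr 1; funext t; unfold gauss; ring_nf
  rw [this, h]
  rw [show Real.pi / (1/2) = 2 * Real.pi by ring]

lemma Qfun_zero : Qfun 0 = 1/2 := by
  rw [Qfun_eq, integral_gauss_Ioi_zero]
  have h : Real.sqrt (2*Real.pi) > 0 := Real.sqrt_pos.2 (by positivity)
  rw [intervalIntegral.integral_same]
  field_simp
  ring

lemma Qfun_nonneg (x : ℝ) : 0 ≤ Qfun x := by
  unfold Qfun
  apply mul_nonneg (by positivity)
  apply MeasureTheory.integral_nonneg
  intro t; positivity

lemma tendsto_Qfun : Tendsto Qfun atTop (nhds 0) := by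
  have h1 : Tendsto (fun y => ∫ t in (0:ℝ)..y, gauss t) atTop
      (nhds (∫ t in Set.Ioi (0:ℝ), gauss t)) :=
    MeasureTheory.intervalIntegral_tendsto_integral_Ioi 0
      integrable_gauss.integrableOn tendsto_id
  have h2 : Tendsto (fun y => (1 / Real.sqrt (2 * Real.pi)) *
      ((∫ t in Set.Ioi (0:ℝ), gauss t) - ∫ t in (0:ℝ)..y, gauss t)) atTop
      (nhds ((1 / Real.sqrt (2 * Real.pi)) * ((∫ t in Set.Ioi (0:ℝ), gauss t) - (∫ t in Set.Ioi (0:ℝ), gauss t)))) :=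
    (tendsto_const_nhds.sub h1).const_mul _
  simp only [sub_self, mul_zero] at h2
  convert h2 using 1
  funext y; exact Qfun_eq y


lemma hasDerivAt_gauss (y : ℝ) : HasDerivAt gauss (-y * gauss y) y := by
  have h : HasDerivAt (fun t : ℝ => -(t^2)/2) (-y) y := by
    have := (hasDerivAt_pow 2 y).neg.div_const 2
    convert this using 1 <;> try with_reducible_and_instances rfl
    push_cast; ring
  have := h.exp
  unfold gauss
  convert this using 1
  ring

noncomputable def ss (y : ℝ) : ℝ := Real.sqrt (y^2 + 2*π)
noncomputable def DD (y : ℝ) : ℝ := (π-1)*y + ss y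
noncomputable def KK (y : ℝ) : ℝ := (π-2)*y^2 + 2*π*(π-3) - (π-2)*y*ss y
noncomputable def yc : ℝ := Real.sqrt (2*π*(π-3)^2/((π-2)*(4-π)))
noncomputable def w (y : ℝ) : ℝ := Qfun y - (1/Real.sqrt (2*π)) * gauss y * (π / DD y)
noncomputable def Wd (y : ℝ) : ℝ :=
  (1/Real.sqrt (2*π)) * gauss y * (π*y/DD y + π*((π-1) + y/ss y)/(DD y)^2 - 1)

lemma pi_gt3 : (3:ℝ) < π := pi_gt_three
lemma pi_lt4 : π < 4 := by linarith [pi_lt_d2]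

lemma ss_pos (y : ℝ) : 0 < ss y := Real.sqrt_pos.2 (by positivity)

lemma ss_sq (y : ℝ) : (ss y)^2 = y^2 + 2*π := Real.sq_sqrt (by positivity)

lemma DD_pos {y : ℝ} (hy : 0 ≤ y) : 0 < DD y := by
  have h1 := ss_pos y
  have := pi_gt3
  unfold DD; nlinarith

lemma hasDerivAt_ss (y : ℝ) : HasDerivAt ss (y / ss y) y := by
  have h : HasDerivAt (fun t : ℝ => t^2 + 2*π) (2*y) y := by
    simpa using (hasDerivAt_pow 2 y).add_const (2*π)
  have h2 := h.sqrt (by positivity)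
  have hne : Real.sqrt (y^2 + 2*π) ≠ 0 := by positivity
  unfold ss
  convert h2 using 1
  field_simp

lemma hasDerivAt_DD (y : ℝ) : HasDerivAt DD ((π-1) + y/ss y) y := by
  unfold DD
  exact ((hasDerivAt_id y).const_mul (π-1)).add (hasDerivAt_ss y) |>.congr_deriv (by simp)

lemma hasDerivAt_w {y : ℝ} (hy : 0 ≤ y) : HasDerivAt w (Wd y) y := by
  have hD := DD_pos hy
  have hinv : HasDerivAt (fun t => π / DD t)
      ((0 * DD y - π * ((π-1) + y/ss y)) / (DD y)^2) y :=
    (hasDerivAt_const y π).div (hasDerivAt_DD y) (ne_of_gt hD)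
  have hprod := ((hasDerivAt_gauss y).mul hinv).const_mul (1/Real.sqrt (2*π))
  have := (hasDerivAt_Qfun y).sub hprod
  unfold w Wd
  convert this using 1 <;> try with_reducible_and_instances rfl
  on_goal 1 => funext z; simp only [Pi.sub_apply, Pi.mul_apply]; ring
  have hs := ss_pos y
  field_simp
  ring

lemma Wd_eq {y : ℝ} (hy : 0 ≤ y) : Wd y =
    (1/Real.sqrt (2*π)) * gauss y * (π * KK y / ((DD y)^2 * ss y * (y + ss y))) := by
  have hs := ss_pos y
  have hD := DD_pos hy
  have hys : 0 < y + ss y := by linarith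
  have hs2 := ss_sq y
  unfold Wd
  congr 1
  set s := ss y with hsdef
  set D := DD y with hDdef
  have hDe : D = (π-1)*y + s := rfl
  have hKe : KK y = (π-2)*y^2 + 2*π*(π-3) - (π-2)*y*s := rfl
  have e1 : π*y/D + π*((π-1)+y/s)/D^2 - 1
      = (π*y*D*s + π*((π-1)*s + y) - D^2*s)/(D^2*s) := by
    field_simp
  have e2 : (π*y*D*s + π*((π-1)*s + y) - D^2*s) * (y+s) = π*KK y := by
    rw [hKe, hDe]
    linear_combination (π^2 - 3*π - s^2 + y*s - π*y*s) * hs2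
  rw [e1, div_eq_div_iff (by positivity) (by positivity)]
  linear_combination (D^2*s) * e2



lemma yc_pos : 0 < yc := by
  have h3 := pi_gt3; have h4 := pi_lt4
  have h5 : (0:ℝ) < (π-3)^2 := pow_pos (by linarith) 2
  unfold yc
  apply Real.sqrt_pos.2
  apply div_pos (by nlinarith) (by nlinarith)

lemma yc_sq : yc^2 = 2*π*(π-3)^2/((π-2)*(4-π)) := by
  have h3 := pi_gt3; have h4 := pi_lt4
  have h5 : (0:ℝ) < (π-3)^2 := pow_pos (by linarith) 2
  unfold yc
  apply Real.sq_sqrt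
  exact le_of_lt (div_pos (by nlinarith) (by nlinarith))


lemma KK_nonneg {y : ℝ} (hy : 0 ≤ y) (hyc : y ≤ yc) : 0 ≤ KK y := by
  have h3 := pi_gt3; have h4 := pi_lt4
  have hs := ss_pos y
  have hs2 := ss_sq y
  have hy2 : y^2 ≤ yc^2 := by nlinarith [yc_pos]
  rw [yc_sq] at hy2
  have hy2' : (π-2)*(4-π)*y^2 ≤ 2*π*(π-3)^2 := by
    rw [le_div_iff₀ (by nlinarith : (0:ℝ) < (π-2)*(4-π))] at hy2
    nlinarith
  have hA : 0 < (π-2)*y^2 + 2*π*(π-3) := by nlinarith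
  have hB : 0 ≤ (π-2)*y*ss y := by
    apply mul_nonneg (mul_nonneg (by linarith) hy) (le_of_lt hs)
  have hBsq : ((π-2)*y*ss y)^2 = (π-2)^2*y^2*(y^2+2*π) := by
    rw [mul_pow, mul_pow, hs2]; try ring
  have hsq : ((π-2)*y*ss y)^2 ≤ ((π-2)*y^2 + 2*π*(π-3))^2 := by
    rw [hBsq]
    nlinarith [mul_le_mul_of_nonneg_left hy2' (by positivity : (0:ℝ) ≤ 2*π)]
  have := (pow_le_pow_iff_left₀ hB (le_of_lt hA) two_ne_zero).1 hsq
  unfold KK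
  linarith

lemma KK_nonpos {y : ℝ} (hyc : yc ≤ y) : KK y ≤ 0 := by
  have h3 := pi_gt3; have h4 := pi_lt4
  have hy : 0 ≤ y := le_trans (le_of_lt yc_pos) hyc
  have hs := ss_pos y
  have hs2 := ss_sq y
  have hy2 : yc^2 ≤ y^2 := by nlinarith [yc_pos]
  rw [yc_sq] at hy2
  have hy2' : 2*π*(π-3)^2 ≤ (π-2)*(4-π)*y^2 := by
    rw [div_le_iff₀ (by nlinarith : (0:ℝ) < (π-2)*(4-π))] at hy2
    nlinarith
  have hA : 0 < (π-2)*y^2 + 2*π*(π-3) := by nlinarith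
  have hB : 0 ≤ (π-2)*y*ss y := by
    apply mul_nonneg (mul_nonneg (by linarith) hy) (le_of_lt hs)
  have hBsq : ((π-2)*y*ss y)^2 = (π-2)^2*y^2*(y^2+2*π) := by
    rw [mul_pow, mul_pow, hs2]; try ring
  have hsq : ((π-2)*y^2 + 2*π*(π-3))^2 ≤ ((π-2)*y*ss y)^2 := by
    rw [hBsq]
    nlinarith [mul_le_mul_of_nonneg_left hy2' (by positivity : (0:ℝ) ≤ 2*π)]
  have := (pow_le_pow_iff_left₀ (le_of_lt hA) hB two_ne_zero).1 hsq
  unfold KK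
  linarith

lemma w_zero : w 0 = 0 := by
  have h2π : (0:ℝ) < 2*π := by positivity
  have hsq : Real.sqrt (2*π) * Real.sqrt (2*π) = 2*π := Real.mul_self_sqrt (le_of_lt h2π)
  have hsp : 0 < Real.sqrt (2*π) := Real.sqrt_pos.2 h2π
  unfold w DD ss gauss
  rw [Qfun_zero]
  have e0 : (0:ℝ)^2 + 2*π = 2*π := by ring
  have e1 : Real.exp (-(0:ℝ)^2/2) = 1 := by norm_num
  rw [e0, e1]
  rw [show (π-1)*(0:ℝ) + Real.sqrt (2*π) = Real.sqrt (2*π) by ring]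
  have h2 : Real.sqrt 2 * Real.sqrt 2 = 2 := Real.mul_self_sqrt (by norm_num)
  have hp : Real.sqrt π * Real.sqrt π = π := Real.mul_self_sqrt (le_of_lt Real.pi_pos)
  field_simp
  nlinarith [h2, hp]

lemma tendsto_gauss : Tendsto gauss atTop (nhds 0) := by
  have h1 : Tendsto (fun y : ℝ => -(y^2)/2) atTop atBot := by
    apply Tendsto.atBot_div_const (by norm_num)
    exact tendsto_neg_atBot_iff.2 (tendsto_pow_atTop two_ne_zero)
  exact Real.tendsto_exp_atBot.comp h1

lemma tendsto_w : Tendsto w atTop (nhds 0) := by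
  have hterm : Tendsto (fun y => (1/Real.sqrt (2*π)) * gauss y * (π / DD y)) atTop (nhds 0) := by
    have h2π : (0:ℝ) < 2*π := by positivity
    have hsp : 0 < Real.sqrt (2*π) := Real.sqrt_pos.2 h2π
    apply squeeze_zero' (g := fun y => gauss y * ((1/Real.sqrt (2*π)) * (π / Real.sqrt (2*π))))
    · filter_upwards [eventually_ge_atTop (0:ℝ)] with y hy
      have := DD_pos hy
      have := gauss_pos y
      positivity
    · filter_upwards [eventually_ge_atTop (0:ℝ)] with y hy
      have hD : Real.sqrt (2*π) ≤ DD y := by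
        have h1 : Real.sqrt (2*π) ≤ ss y := by
          apply Real.sqrt_le_sqrt; nlinarith [sq_nonneg y]
        have := pi_gt3
        unfold DD; nlinarith
      have hg := gauss_pos y
      have hDp := DD_pos hy
      rw [show (1/Real.sqrt (2*π)) * gauss y * (π / DD y)
          = gauss y * ((1/Real.sqrt (2*π)) * (π / DD y)) by ring]
      apply mul_le_mul_of_nonneg_left _ (le_of_lt hg)
      apply mul_le_mul_of_nonneg_left _ (by positivity)
      apply div_le_div_of_nonneg_left (by positivity) (by positivity) hD
    · simpa using tendsto_gauss.mul_const ((1/Real.sqrt (2*π)) * (π / Real.sqrt (2*π)))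
  have h := tendsto_Qfun.sub hterm
  rw [show (0:ℝ) - 0 = 0 by ring] at h
  exact h

lemma w_mono : MonotoneOn w (Icc 0 yc) := by
  apply monotoneOn_of_deriv_nonneg (convex_Icc 0 yc)
  · intro y hy
    exact ((hasDerivAt_w hy.1).continuousAt).continuousWithinAt
  · intro y hy
    rw [interior_Icc] at hy
    exact (hasDerivAt_w (le_of_lt hy.1)).differentiableAt.differentiableWithinAt
  · intro y hy
    rw [interior_Icc] at hy
    rw [(hasDerivAt_w (le_of_lt hy.1)).deriv, Wd_eq (le_of_lt hy.1)]
    have hy1 : 0 < y := hy.1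
    have hg := gauss_pos y
    have hs := ss_pos y
    have hD := DD_pos (le_of_lt hy.1)
    have hK := KK_nonneg (le_of_lt hy.1) (le_of_lt hy.2)
    have hsp : 0 < Real.sqrt (2*π) := Real.sqrt_pos.2 (by positivity)
    have hys : 0 < y + ss y := by linarith
    positivity

lemma w_anti : AntitoneOn w (Ici yc) := by
  apply antitoneOn_of_deriv_nonpos (convex_Ici yc)
  · intro y hy
    exact ((hasDerivAt_w (le_trans (le_of_lt yc_pos) hy)).continuousAt).continuousWithinAt
  · intro y hy
    rw [interior_Ici] at hy
    exact (hasDerivAt_w (le_of_lt (lt_trans yc_pos hy))).differentiableAt.differentiableWithinAt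
  · intro y hy
    rw [interior_Ici] at hy
    have hy0 : (0:ℝ) ≤ y := le_of_lt (lt_trans yc_pos hy)
    rw [(hasDerivAt_w hy0).deriv, Wd_eq hy0]
    have hg := gauss_pos y
    have hs := ss_pos y
    have hD := DD_pos hy0
    have hK := KK_nonpos (le_of_lt hy)
    have hsp : 0 < Real.sqrt (2*π) := Real.sqrt_pos.2 (by positivity)
    have hys : 0 < y + ss y := by linarith
    have hnum : π * KK y ≤ 0 := by
      apply mul_nonpos_of_nonneg_of_nonpos (le_of_lt Real.pi_pos) hK
    have hden : 0 < (DD y)^2 * ss y * (y + ss y) := by positivity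
    have : π * KK y / ((DD y)^2 * ss y * (y + ss y)) ≤ 0 := div_nonpos_of_nonpos_of_nonneg hnum (le_of_lt hden)
    have hc : 0 < (1/Real.sqrt (2*π)) * gauss y := by positivity
    calc (1/Real.sqrt (2*π)) * gauss y * (π * KK y / ((DD y)^2 * ss y * (y + ss y)))
        ≤ (1/Real.sqrt (2*π)) * gauss y * 0 := by
          apply mul_le_mul_of_nonneg_left this (le_of_lt hc)
      _ = 0 := by ring

lemma boyd {y : ℝ} (hy : 0 ≤ y) :
    (1/Real.sqrt (2*π)) * gauss y * (π / DD y) ≤ Qfun y := by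
  have h : 0 ≤ w y := by
    rcases le_or_gt y yc with hcase | hcase
    · have := w_mono (Set.mem_Icc.2 ⟨le_refl 0, le_of_lt yc_pos⟩) (Set.mem_Icc.2 ⟨hy, hcase⟩) hy
      rwa [w_zero] at this
    · apply le_of_tendsto tendsto_w
      filter_upwards [eventually_ge_atTop y] with z hz
      exact w_anti (Set.mem_Ici.2 (le_of_lt hcase)) (Set.mem_Ici.2 (le_trans (le_of_lt hcase) hz)) hz
  unfold w at h
  linarith

lemma hasDerivAt_expk (κ t : ℝ) :
    HasDerivAt (fun u : ℝ => Real.exp (-(κ*u^2)/2)) (-(κ*t) * Real.exp (-(κ*t^2)/2)) t := by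
  have h : HasDerivAt (fun u : ℝ => -(κ*u^2)/2) (-(κ*t)) t := by
    have := ((hasDerivAt_pow 2 t).const_mul κ).neg.div_const 2
    convert this using 1 <;> try with_reducible_and_instances rfl
    push_cast; ring
  have := h.exp
  convert this using 1
  ring

lemma tendsto_expk {κ : ℝ} (hκ : 0 < κ) :
    Tendsto (fun t : ℝ => Real.exp (-(κ*t^2)/2)) atTop (nhds 0) := by
  have h1 : Tendsto (fun t : ℝ => -(κ*t^2)/2) atTop atBot := by
    apply Tendsto.atBot_div_const (by norm_num)
    apply tendsto_neg_atBot_iff.2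
    exact (tendsto_pow_atTop two_ne_zero).const_mul_atTop hκ
  exact Real.tendsto_exp_atBot.comp h1

end QAux

open QAux

set_option maxHeartbeats 1000000 in
theorem stmt0 (x κ : ℝ) (hκ : 1 ≤ κ) :
    Qfun x ≥ (Real.exp (1 / (Real.pi * (κ - 1) + 2)) / (2 * κ)) *
      Real.sqrt ((κ - 1) * (Real.pi * (κ - 1) + 2) / Real.pi) *
      Real.exp (-(κ * x ^ 2) / 2) := by
  rcases eq_or_lt_of_le hκ with heq | hκ1
  · rw [← heq]
    norm_num
    exact Qfun_nonneg x
  set a : ℝ := κ - 1 with ha_def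
  have ha : 0 < a := by simp only [ha_def]; linarith
  have hκ0 : 0 < κ := by linarith
  set lam : ℝ := π * a + 2 with hlam_def
  have hπ := Real.pi_pos
  have hlam : 2 < lam := by simp only [hlam_def]; nlinarith
  have hlam0 : 0 < lam := by linarith
  set x₀ : ℝ := Real.sqrt (2/(a*lam)) with hx0_def
  have hx0 : 0 < x₀ := Real.sqrt_pos.2 (by positivity)
  have hx0sq : x₀^2 = 2/(a*lam) := Real.sq_sqrt (by positivity)
  have hax0 : a * x₀^2 = 2/lam := by rw [hx0sq]; field_simp
  have hax0le : a * x₀^2 ≤ 1 := by rw [hax0, div_le_one hlam0]; linarith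
  set C : ℝ := Real.exp (1 / lam) / (2 * κ) * Real.sqrt (a * lam / π) with hC_def
  have hsqpi : 0 < Real.sqrt (2*π) := Real.sqrt_pos.2 (by positivity)
  -- constant identity
  have e1 : x₀ * Real.sqrt (a*lam/π) = Real.sqrt (2/π) := by
    rw [hx0_def, ← Real.sqrt_mul (by positivity)]
    congr 1
    field_simp
  have e2 : Real.sqrt (2*π) * Real.sqrt (2/π) = 2 := by
    rw [← Real.sqrt_mul (by positivity)]
    rw [show 2*π*(2/π) = 4 by field_simp; ring]
    rw [show (4:ℝ) = 2^2 by norm_num, Real.sqrt_sq (by norm_num)]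
  have hCeq : C = Real.exp (a*x₀^2/2) / (Real.sqrt (2*π) * κ * x₀) := by
    rw [hC_def, show a*x₀^2/2 = 1/lam by rw [hax0]; ring]
    rw [div_mul_eq_mul_div, div_eq_div_iff (by positivity) (by positivity)]
    rw [show Real.exp (1/lam) * Real.sqrt (a*lam/π) * (Real.sqrt (2*π) * κ * x₀)
        = Real.exp (1/lam) * κ * (Real.sqrt (2*π) * (x₀ * Real.sqrt (a*lam/π))) by ring]
    rw [e1, e2]
    ring
  have hC : 0 < C := by rw [hCeq]; positivity
  -- the auxiliary function h and its derivative
  set h : ℝ → ℝ := fun t => Qfun t - C * Real.exp (-(κ*t^2)/2) with hh_def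
  have hDh : ∀ t, HasDerivAt h
      (C*κ*t*Real.exp (-(κ*t^2)/2) - (1/Real.sqrt (2*π)) * gauss t) t := by
    intro t
    have h1 := (hasDerivAt_Qfun t).sub ((hasDerivAt_expk κ t).const_mul C)
    convert h1 using 1 <;> try with_reducible_and_instances rfl
    ring
  -- the comparison function gg
  set gg : ℝ → ℝ := fun t => Real.exp (a*t^2/2)/(Real.sqrt (2*π)*κ*t) with hgg_def
  have hggx0 : gg x₀ = C := hCeq.symm
  have hkey : ∀ t : ℝ, 0 < t →
      C*κ*t*Real.exp (-(κ*t^2)/2) - (1/Real.sqrt (2*π)) * gauss t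
      = (κ*t*Real.exp (-(κ*t^2)/2)) * (C - gg t) := by
    intro t ht
    have hgauss : gauss t = Real.exp (a*t^2/2) * Real.exp (-(κ*t^2)/2) := by
      unfold gauss; rw [← Real.exp_add]; congr 1; simp only [ha_def]; ring
    rw [hgauss, hgg_def]
    field_simp
  -- derivative of gg
  have hDgg : ∀ t : ℝ, 0 < t → HasDerivAt gg
      (Real.exp (a*t^2/2) * (a*t^2 - 1) / (Real.sqrt (2*π)*κ*t^2)) t := by
    intro t ht
    have hnum : HasDerivAt (fun u : ℝ => Real.exp (a*u^2/2)) (a*t*Real.exp (a*t^2/2)) t := by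
      have hin : HasDerivAt (fun u : ℝ => a*u^2/2) (a*t) t := by
        have := ((hasDerivAt_pow 2 t).const_mul a).div_const 2
        convert this using 1 <;> try with_reducible_and_instances rfl
        push_cast; ring
      have := hin.exp
      convert this using 1
      ring
    have hden : HasDerivAt (fun u : ℝ => Real.sqrt (2*π)*κ*u) (Real.sqrt (2*π)*κ) t := by
      simpa using (hasDerivAt_id t).const_mul (Real.sqrt (2*π)*κ)
    have hd := hnum.div hden (by positivity)
    rw [hgg_def]
    convert hd using 1 <;> try with_reducible_and_instances rfl
    field_simp
  -- the turning point of gg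
  set xm : ℝ := Real.sqrt (1/a) with hxm_def
  have hxm : 0 < xm := Real.sqrt_pos.2 (by positivity)
  have hxmsq : xm^2 = 1/a := Real.sq_sqrt (by positivity)
  have hx0xm : x₀ ≤ xm := by
    rw [hx0_def, hxm_def]
    apply Real.sqrt_le_sqrt
    rw [div_le_div_iff₀ (by positivity) (by positivity)]
    nlinarith
  have gg_anti : AntitoneOn gg (Icc x₀ xm) := by
    apply antitoneOn_of_deriv_nonpos (convex_Icc x₀ xm)
    · intro t ht
      exact (hDgg t (lt_of_lt_of_le hx0 ht.1)).continuousAt.continuousWithinAt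
    · intro t ht
      rw [interior_Icc] at ht
      exact (hDgg t (lt_trans hx0 ht.1)).differentiableAt.differentiableWithinAt
    · intro t ht
      rw [interior_Icc] at ht
      have ht0 : 0 < t := lt_trans hx0 ht.1
      rw [(hDgg t ht0).deriv]
      apply div_nonpos_of_nonpos_of_nonneg _ (by positivity)
      apply mul_nonpos_of_nonneg_of_nonpos (Real.exp_nonneg _)
      have hsq : t^2 < xm^2 := by nlinarith [ht.2, ht0, hxm]
      have hxma : a * xm^2 = 1 := by rw [hxmsq]; field_simp
      nlinarith [hsq, hxma, ha]
  have gg_mono : MonotoneOn gg (Ici xm) := by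
    apply monotoneOn_of_deriv_nonneg (convex_Ici xm)
    · intro t ht
      exact (hDgg t (lt_of_lt_of_le hxm ht)).continuousAt.continuousWithinAt
    · intro t ht
      rw [interior_Ici] at ht
      exact (hDgg t (lt_trans hxm ht)).differentiableAt.differentiableWithinAt
    · intro t ht
      rw [interior_Ici] at ht
      have ht0 : 0 < t := lt_trans hxm ht
      rw [(hDgg t ht0).deriv]
      apply div_nonneg _ (by positivity)
      apply mul_nonneg (Real.exp_nonneg _)
      have hsq : xm^2 ≤ t^2 := by nlinarith [Set.mem_Ioi.1 ht, ht0, hxm]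
      have hxma : a * xm^2 = 1 := by rw [hxmsq]; field_simp
      nlinarith [hsq, hxma, ha]
  -- h x₀ ≥ 0 from Boyd's inequality
  have hss0 : Real.sqrt (x₀^2 + 2*π) = (π*a+1)*x₀ := by
    rw [show x₀^2+2*π = ((π*a+1)*x₀)^2 by rw [mul_pow, hx0sq, hlam_def]; field_simp; ring]
    exact Real.sqrt_sq (by positivity)
  have hDD0 : DD x₀ = π*κ*x₀ := by
    unfold DD ss
    rw [hss0]
    simp only [ha_def]
    ring
  have hhx0 : 0 ≤ h x₀ := by
    have hb := boyd (le_of_lt hx0)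
    have heqv : C * Real.exp (-(κ*x₀^2)/2) = (1/Real.sqrt (2*π)) * gauss x₀ * (π / DD x₀) := by
      rw [hCeq, hDD0]
      unfold gauss
      rw [div_mul_eq_mul_div, ← Real.exp_add,
        show a*x₀^2/2 + -(κ*x₀^2)/2 = -(x₀^2)/2 by simp only [ha_def]; ring]
      field_simp
    simp only [hh_def]
    linarith
  -- left region
  have hL : AntitoneOn h (Iic x₀) := by
    apply antitoneOn_of_deriv_nonpos (convex_Iic x₀)
    · intro t _; exact (hDh t).continuousAt.continuousWithinAt
    · intro t _; exact (hDh t).differentiableAt.differentiableWithinAt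
    · intro t ht
      rw [interior_Iic] at ht
      rw [(hDh t).deriv]
      rcases le_or_gt t 0 with ht0 | ht0
      · have h1 : C*κ*t*Real.exp (-(κ*t^2)/2) ≤ 0 := by
          apply mul_nonpos_of_nonpos_of_nonneg _ (Real.exp_nonneg _)
          exact mul_nonpos_of_nonneg_of_nonpos (le_of_lt (mul_pos hC hκ0)) ht0
        have h2 : 0 < (1/Real.sqrt (2*π)) * gauss t := by
          have := gauss_pos t; positivity
        linarith
      · rw [hkey t ht0]
        apply mul_nonpos_of_nonneg_of_nonpos (by positivity)
        rw [sub_nonpos, hgg_def]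
        -- C ≤ gg t  for 0 < t ≤ x₀
        rw [hCeq, div_le_div_iff₀ (by positivity) (by positivity)]
        -- exp(a x₀²/2) * (√2π κ t) ≤ exp(a t²/2) * (√2π κ x₀)
        rw [show Real.exp (a*x₀^2/2) * (Real.sqrt (2*π)*κ*t)
            = (Real.sqrt (2*π)*κ) * (t * Real.exp (a*x₀^2/2)) by ring,
          show Real.exp (a*t^2/2) * (Real.sqrt (2*π)*κ*x₀)
            = (Real.sqrt (2*π)*κ) * (x₀ * Real.exp (a*t^2/2)) by ring]
        apply mul_le_mul_of_nonneg_left _ (by positivity)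
        -- t * exp(a x₀²/2) ≤ x₀ * exp(a t²/2)  i.e.  t exp(u) ≤ x₀ with u = a(x₀²-t²)/2
        have htle : t ≤ x₀ := le_of_lt (Set.mem_Iio.1 ht)
        have h1 : 1 - a*(x₀^2 - t^2)/2 ≤ Real.exp (-(a*(x₀^2 - t^2)/2)) := by
          have := Real.add_one_le_exp (-(a*(x₀^2 - t^2)/2))
          linarith
        have haux2 := mul_le_mul_of_nonneg_left htle (mul_nonneg ha.le hx0.le)
        have hfac : 0 ≤ 2 - a*x₀*(x₀+t) := by nlinarith [haux2, hax0le]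
        have h2 : t ≤ x₀ * (1 - a*(x₀^2 - t^2)/2) := by
          nlinarith [mul_nonneg (sub_nonneg.2 htle) hfac]
        have h3 : t ≤ x₀ * Real.exp (-(a*(x₀^2 - t^2)/2)) :=
          le_trans h2 (mul_le_mul_of_nonneg_left h1 hx0.le)
        have h4 := mul_le_mul_of_nonneg_right h3 (Real.exp_nonneg (a*(x₀^2 - t^2)/2))
        rw [mul_assoc, ← Real.exp_add] at h4
        rw [show -(a*(x₀^2 - t^2)/2) + a*(x₀^2 - t^2)/2 = 0 by ring, Real.exp_zero, mul_one] at h4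
        calc t * Real.exp (a*x₀^2/2) = t * Real.exp (a*(x₀^2 - t^2)/2) * Real.exp (a*t^2/2) := by
              rw [mul_assoc, ← Real.exp_add]; congr 2; ring
          _ ≤ x₀ * Real.exp (a*t^2/2) := by
              apply mul_le_mul_of_nonneg_right _ (Real.exp_nonneg _)
              exact h4
  -- final goal
  rw [ge_iff_le, ← sub_nonneg]
  have hgoal : 0 ≤ h x := by
    rcases le_or_gt x x₀ with hx | hx
    · have := hL (Set.mem_Iic.2 hx) (Set.mem_Iic.2 (le_refl x₀)) hx
      linarith
    · rcases le_or_gt (gg x) C with hcase | hcase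
      · -- h monotone on [x₀, x]
        have hM : MonotoneOn h (Icc x₀ x) := by
          apply monotoneOn_of_deriv_nonneg (convex_Icc x₀ x)
          · intro t _; exact (hDh t).continuousAt.continuousWithinAt
          · intro t ht
            rw [interior_Icc] at ht
            exact (hDh t).differentiableAt.differentiableWithinAt
          · intro t ht
            rw [interior_Icc] at ht
            have ht0 : 0 < t := lt_trans hx0 ht.1
            rw [(hDh t).deriv, hkey t ht0]
            apply mul_nonneg (by positivity)
            rw [sub_nonneg]
            rcases le_or_gt t xm with h1 | h1
            · have step : gg t ≤ gg x₀ := gg_anti (Set.mem_Icc.2 ⟨le_refl x₀, hx0xm⟩)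
                (Set.mem_Icc.2 ⟨le_of_lt ht.1, h1⟩) (le_of_lt ht.1)
              rw [hggx0] at step
              exact step
            · have step : gg t ≤ gg x := gg_mono (Set.mem_Ici.2 (le_of_lt h1))
                (Set.mem_Ici.2 (le_trans (le_of_lt h1) (le_of_lt ht.2))) (le_of_lt ht.2)
              linarith
        have := hM (Set.mem_Icc.2 ⟨le_refl x₀, le_of_lt hx⟩)
          (Set.mem_Icc.2 ⟨le_of_lt hx, le_refl x⟩) (le_of_lt hx)
        linarith
      · -- h antitone on [x, ∞), tends to 0
        have hxmx : xm < x := by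
          by_contra hcon
          push_neg at hcon
          have := gg_anti (Set.mem_Icc.2 ⟨le_refl x₀, hx0xm⟩)
            (Set.mem_Icc.2 ⟨le_of_lt hx, hcon⟩) (le_of_lt hx)
          rw [hggx0] at this
          linarith
        have hA : AntitoneOn h (Ici x) := by
          apply antitoneOn_of_deriv_nonpos (convex_Ici x)
          · intro t _; exact (hDh t).continuousAt.continuousWithinAt
          · intro t ht
            rw [interior_Ici] at ht
            exact (hDh t).differentiableAt.differentiableWithinAt
          · intro t ht
            rw [interior_Ici] at ht
            have ht0 : 0 < t := lt_trans (lt_trans hxm hxmx) ht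
            rw [(hDh t).deriv, hkey t ht0]
            apply mul_nonpos_of_nonneg_of_nonpos (by positivity)
            rw [sub_nonpos]
            have step : gg x ≤ gg t := gg_mono (Set.mem_Ici.2 (le_of_lt hxmx))
              (Set.mem_Ici.2 (le_trans (le_of_lt hxmx) (le_of_lt ht))) (le_of_lt ht)
            linarith
        have hlim : Tendsto h atTop (nhds 0) := by
          have h1 := (tendsto_expk hκ0).const_mul C
          have h2 := tendsto_Qfun.sub h1
          rw [show (0:ℝ) - C * 0 = 0 by ring] at h2
          exact h2
        apply le_of_tendsto hlim
        filter_upwards [eventually_ge_atTop x] with z hz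
        exact hA (Set.mem_Ici.2 (le_refl x)) (Set.mem_Ici.2 hz) hz
  simpa [hh_def] using hgoal
end

section
/- For all x ≥ 0, R(x) ≥ π / ((π-1)x + √(x² + 2π)), where R(x) = √(2π)·Q(x)·e^{x²/2} and Q is the Gaussian Q-function. -/
open Real MeasureTheory

noncomputable def Rfun (x : ℝ) : ℝ :=
  Real.sqrt (2 * Real.pi) * Qfun x * Real.exp (x ^ 2 / 2)

/-!
Write `g(t) = exp (-t²/2)`, `f` for Boyd's bound and `s = √(x² + 2π)`. The gap
`W(x) = ∫_x^∞ g - g(x) f(x)` vanishes at `0` (since `∫_0^∞ g = √(2π)/2 = π / √(2π) = f(0)`)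
and at `∞`, and `W'(x) = g(x) (x f(x) - 1 - f'(x))` has the sign of `(π - 3) s - x`, which is
positive and then negative on `[0, ∞)`. So `W` increases and then decreases, hence `W ≥ 0`,
which is the claim after multiplying by `exp (x²/2)`.
-/

open Filter Topology Set

theorem hasDerivAt_integral_Ioi {E : Type*} [NormedAddCommGroup E] [NormedSpace ℝ E]
    [CompleteSpace E] {f : ℝ → E} {x : ℝ} (hf : Integrable f) (hfx : ContinuousAt f x) :
    HasDerivAt (fun y ↦ ∫ t in Ioi y, f t) (-f x) x := by
  have hsplit :
      (fun y ↦ ∫ t in Ioi y, f t) = fun y ↦ (∫ t in Ioi 0, f t) - ∫ t in 0..y, f t := by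
    ext y
    rw [← intervalIntegral.integral_Ioi_sub_Ioi' hf.integrableOn hf.integrableOn, sub_sub_cancel]
  rw [hsplit]
  exact (intervalIntegral.integral_hasDerivAt_right hf.intervalIntegrable
    hf.aestronglyMeasurable.stronglyMeasurableAtFilter hfx).const_sub _

theorem nonneg_of_hasDerivAt_nonneg_then_nonpos {W W' : ℝ → ℝ} {a c x : ℝ}
    (hW : ∀ y ∈ Ici a, HasDerivAt W (W' y) y) (hWa : W a = 0)
    (hWtop : Tendsto W atTop (𝓝 0)) (hinc : ∀ y ∈ Ioo a c, 0 ≤ W' y)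
    (hdec : ∀ y ∈ Ioi c, W' y ≤ 0) (hx : a ≤ x) : 0 ≤ W x := by
  have hcont : ContinuousOn W (Ici a) := fun y hy ↦ (hW y hy).continuousAt.continuousWithinAt
  rcases le_or_gt x c with hxc | hcx
  · have hmono : MonotoneOn W (Icc a c) := by
      refine monotoneOn_of_hasDerivWithinAt_nonneg (f' := W') (convex_Icc a c)
        (hcont.mono Icc_subset_Ici_self) (fun y hy ↦ ?_) (fun y hy ↦ ?_)
      · rw [interior_Icc] at hy
        exact (hW y hy.1.le).hasDerivWithinAt
      · rw [interior_Icc] at hy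
        exact hinc y hy
    rw [← hWa]
    exact hmono ⟨le_rfl, hx.trans hxc⟩ ⟨hx, hxc⟩ hx
  · have hanti : AntitoneOn W (Ici x) := by
      refine antitoneOn_of_hasDerivWithinAt_nonpos (f' := W') (convex_Ici x)
        (hcont.mono (Ici_subset_Ici.2 hx)) (fun y hy ↦ ?_) (fun y hy ↦ ?_)
      · rw [interior_Ici] at hy
        exact (hW y (hx.trans hy.out.le)).hasDerivWithinAt
      · rw [interior_Ici] at hy
        exact hdec y (hcx.trans hy)
    refine le_of_tendsto hWtop ?_
    filter_upwards [eventually_ge_atTop x] with y hy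
    exact hanti self_mem_Ici hy hy

noncomputable def gaussTail (x : ℝ) : ℝ := ∫ t in Ioi x, exp (-(t ^ 2) / 2)

noncomputable def boydBound (x : ℝ) : ℝ := π / ((π - 1) * x + √(x ^ 2 + 2 * π))

noncomputable def boydGap (x : ℝ) : ℝ := gaussTail x - exp (-(x ^ 2) / 2) * boydBound x

noncomputable def boydGapDeriv (x : ℝ) : ℝ :=
  let s := √(x ^ 2 + 2 * π)
  exp (-(x ^ 2) / 2) * π * (s - x) * ((π - 3) * s - x) / (s * ((π - 1) * x + s) ^ 2 * (s + x))

theorem integrable_exp_neg_sq_div_two : Integrable fun t : ℝ ↦ exp (-(t ^ 2) / 2) := by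
  simpa [neg_div, div_eq_inv_mul] using integrable_exp_neg_mul_sq (b := 1 / 2) (by norm_num)

theorem gaussTail_zero : gaussTail 0 = √(2 * π) / 2 := by
  have h := integral_gaussian_Ioi (1 / 2)
  simp only [one_div, div_inv_eq_mul, mul_comm π] at h
  rw [gaussTail, ← h]
  congr 1 with t
  ring_nf

theorem hasDerivAt_gaussTail (x : ℝ) : HasDerivAt gaussTail (-exp (-(x ^ 2) / 2)) x :=
  hasDerivAt_integral_Ioi integrable_exp_neg_sq_div_two (by fun_prop)

theorem lt_sqrt_sq_add_two_pi (x : ℝ) : x < √(x ^ 2 + 2 * π) := by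
  refine (le_abs_self x).trans_lt ?_
  rw [← sqrt_sq_eq_abs]
  exact sqrt_lt_sqrt (sq_nonneg x) (by linarith [pi_pos])

theorem boydBound_denom_pos {x : ℝ} (hx : 0 ≤ x) : 0 < (π - 1) * x + √(x ^ 2 + 2 * π) := by
  have : 0 < √(x ^ 2 + 2 * π) := by positivity
  nlinarith [pi_gt_three]

theorem hasDerivAt_boydBound {x : ℝ} (hx : 0 ≤ x) :
    HasDerivAt boydBound
      (-(π * (π - 1 + x / √(x ^ 2 + 2 * π))) / ((π - 1) * x + √(x ^ 2 + 2 * π)) ^ 2) x := by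
  have hs : HasDerivAt (fun y ↦ √(y ^ 2 + 2 * π)) (x / √(x ^ 2 + 2 * π)) x := by
    refine (((hasDerivAt_pow 2 x).add_const (2 * π)).sqrt (by positivity)).congr_deriv ?_
    field_simp
    norm_num
  have hd := ((hasDerivAt_id' x).const_mul (π - 1)).fun_add hs
  refine ((hasDerivAt_const x π).fun_div hd (boydBound_denom_pos hx).ne').congr_deriv ?_
  ring

theorem hasDerivAt_boydGap {x : ℝ} (hx : 0 ≤ x) : HasDerivAt boydGap (boydGapDeriv x) x := by
  have hg : HasDerivAt (fun y ↦ exp (-(y ^ 2) / 2)) (exp (-(x ^ 2) / 2) * (-x)) x := by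
    refine (((hasDerivAt_pow 2 x).neg).div_const 2).exp.congr_deriv ?_
    norm_num
    ring
  refine ((hasDerivAt_gaussTail x).sub (hg.mul (hasDerivAt_boydBound hx))).congr_deriv ?_
  set s := √(x ^ 2 + 2 * π) with hs_def
  have hs2 : s ^ 2 = x ^ 2 + 2 * π := sq_sqrt (by positivity)
  have hs0 : 0 < s := by positivity
  have hsx : 0 < s + x := by linarith
  have hd0 : x * (π - 1) + s ≠ 0 := by rw [mul_comm]; exact (boydBound_denom_pos hx).ne'
  simp only [boydGapDeriv, boydBound]
  rw [← hs_def]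
  field_simp
  linear_combination (-(s ^ 2) - (π - 1) * x * s) * hs2

theorem boydGapDeriv_nonneg {x : ℝ} (hx : 0 ≤ x) (h : x ≤ (π - 3) * √(x ^ 2 + 2 * π)) :
    0 ≤ boydGapDeriv x := by
  have hxs := lt_sqrt_sq_add_two_pi x
  have := boydBound_denom_pos hx
  unfold boydGapDeriv
  apply div_nonneg
  · exact mul_nonneg (mul_nonneg (by positivity) (by linarith)) (by linarith)
  · positivity

theorem boydGapDeriv_nonpos {x : ℝ} (hx : 0 ≤ x) (h : (π - 3) * √(x ^ 2 + 2 * π) ≤ x) :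
    boydGapDeriv x ≤ 0 := by
  have hxs := lt_sqrt_sq_add_two_pi x
  have := boydBound_denom_pos hx
  unfold boydGapDeriv
  apply div_nonpos_of_nonpos_of_nonneg
  · exact mul_nonpos_of_nonneg_of_nonpos (mul_nonneg (by positivity) (by linarith)) (by linarith)
  · positivity

theorem le_pi_sub_three_mul_sqrt_iff {x : ℝ} (hx : 0 ≤ x) :
    x ≤ (π - 3) * √(x ^ 2 + 2 * π) ↔ x ^ 2 * (1 - (π - 3) ^ 2) ≤ 2 * π * (π - 3) ^ 2 := by
  have := pi_gt_three
  rw [← pow_le_pow_iff_left₀ hx (by positivity) two_ne_zero, mul_pow, sq_sqrt (by positivity)]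
  constructor <;> intro <;> linarith

theorem exists_boydGapDeriv_sign_change :
    ∃ c, (∀ x ∈ Ioo 0 c, 0 ≤ boydGapDeriv x) ∧ ∀ x ∈ Ioi c, boydGapDeriv x ≤ 0 := by
  have hk : 0 < 1 - (π - 3) ^ 2 := by nlinarith [pi_gt_three, pi_lt_d2]
  set c := √(2 * π * (π - 3) ^ 2 / (1 - (π - 3) ^ 2))
  have hc2 : c ^ 2 * (1 - (π - 3) ^ 2) = 2 * π * (π - 3) ^ 2 := by
    rw [sq_sqrt (by positivity)]
    field_simp
  refine ⟨c, fun x hx ↦ ?_, fun x hx ↦ ?_⟩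
  · refine boydGapDeriv_nonneg hx.1.le ?_
    rw [le_pi_sub_three_mul_sqrt_iff hx.1.le, ← hc2]
    exact mul_le_mul_of_nonneg_right (pow_le_pow_left₀ hx.1.le hx.2.le 2) hk.le
  · have hx0 : 0 ≤ x := (sqrt_nonneg _).trans hx.out.le
    refine boydGapDeriv_nonpos hx0 (le_of_not_ge fun h ↦ ?_)
    rw [le_pi_sub_three_mul_sqrt_iff hx0, ← hc2] at h
    have : c ^ 2 < x ^ 2 := by gcongr; exact hx.out
    nlinarith

theorem boydGap_zero : boydGap 0 = 0 := by
  have h2pi : √(2 * π) ^ 2 = 2 * π := sq_sqrt (by positivity)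
  have : 0 < √(2 * π) := by positivity
  rw [boydGap, gaussTail_zero, boydBound]
  simp only [zero_pow two_ne_zero, zero_add, mul_zero, neg_zero, zero_div, exp_zero, one_mul]
  field_simp
  linarith

theorem tendsto_boydGap_atTop : Tendsto boydGap atTop (𝓝 0) := by
  have hexp : Tendsto (fun x : ℝ ↦ exp (-(x ^ 2) / 2)) atTop (𝓝 0) :=
    tendsto_exp_atBot.comp <|
      (tendsto_neg_atTop_atBot.comp (tendsto_pow_atTop two_ne_zero)).atBot_div_const two_pos
  have hdenom : Tendsto (fun x ↦ (π - 1) * x + √(x ^ 2 + 2 * π)) atTop atTop :=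
    Tendsto.atTop_add_nonneg (tendsto_id.const_mul_atTop (by linarith [pi_gt_three]))
      fun _ ↦ sqrt_nonneg _
  have hbound : Tendsto boydBound atTop (𝓝 0) := tendsto_const_nhds.div_atTop hdenom
  have hTail : Tendsto gaussTail atTop (𝓝 0) := tendsto_integral_Ioi_zero tendsto_id
  have := hTail.sub (hexp.mul hbound)
  rwa [mul_zero, sub_zero] at this

theorem boydGap_nonneg {x : ℝ} (hx : 0 ≤ x) : 0 ≤ boydGap x := by
  obtain ⟨c, hinc, hdec⟩ := exists_boydGapDeriv_sign_change
  exact nonneg_of_hasDerivAt_nonneg_then_nonpos (fun y hy ↦ hasDerivAt_boydGap hy) boydGap_zero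
    tendsto_boydGap_atTop hinc hdec hx

theorem stmt6 (x : ℝ) (hx : 0 ≤ x) :
    Rfun x ≥ Real.pi / ((Real.pi - 1) * x + Real.sqrt (x ^ 2 + 2 * Real.pi)) := by
  have hR : Rfun x = gaussTail x * exp (x ^ 2 / 2) := by
    have : 0 < √(2 * π) := by positivity
    simp only [Rfun, Qfun, gaussTail]
    field_simp
  have hgap : exp (-(x ^ 2) / 2) * boydBound x ≤ gaussTail x := sub_nonneg.1 (boydGap_nonneg hx)
  calc π / ((π - 1) * x + √(x ^ 2 + 2 * π))
      = exp (-(x ^ 2) / 2) * boydBound x * exp (x ^ 2 / 2) := by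
        rw [mul_right_comm, ← exp_add, neg_div, neg_add_cancel, exp_zero, one_mul, boydBound]
    _ ≤ Rfun x := by rw [hR]; gcongr
end

section
/- For κ > 1 and x ≥ 0, the inequality π·κ·x / ((π-1)x + √(x² + 2π)) ≥ 1 holds if and only if x ≥ √2/√((κ-1)(π(κ-1)+2)). -/
open Real

theorem stmt8 (κ x : ℝ) (hκ : 1 < κ) (hx : 0 ≤ x) :
    1 ≤ Real.pi * κ * x / ((Real.pi - 1) * x + Real.sqrt (x ^ 2 + 2 * Real.pi)) ↔
      Real.sqrt 2 / Real.sqrt ((κ - 1) * (Real.pi * (κ - 1) + 2)) ≤ x := by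
  have hπ : (3:ℝ) < Real.pi := Real.pi_gt_three
  have hκ1 : 0 < κ - 1 := by linarith
  have hc : 0 < (κ - 1) * (Real.pi * (κ - 1) + 2) := by
    apply mul_pos hκ1; nlinarith
  have hpos : 0 < x ^ 2 + 2 * Real.pi := by nlinarith [sq_nonneg x]
  have hs : 0 < Real.sqrt (x ^ 2 + 2 * Real.pi) := Real.sqrt_pos.mpr hpos
  have hsq : Real.sqrt (x ^ 2 + 2 * Real.pi) ^ 2 = x ^ 2 + 2 * Real.pi :=
    Real.sq_sqrt hpos.le
  have hD : 0 < (Real.pi - 1) * x + Real.sqrt (x ^ 2 + 2 * Real.pi) := by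
    have : 0 ≤ (Real.pi - 1) * x := mul_nonneg (by linarith) hx
    linarith
  -- rewrite RHS as a polynomial inequality
  have keyR : Real.sqrt 2 / Real.sqrt ((κ - 1) * (Real.pi * (κ - 1) + 2)) ≤ x ↔
      2 ≤ (κ - 1) * (Real.pi * (κ - 1) + 2) * x ^ 2 := by
    rw [div_le_iff₀ (Real.sqrt_pos.mpr hc)]
    nth_rewrite 1 [show x = Real.sqrt (x ^ 2) by rw [Real.sqrt_sq hx]]
    rw [← Real.sqrt_mul (sq_nonneg x),
      Real.sqrt_le_sqrt_iff (by positivity)]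
    constructor <;> intro h <;> nlinarith
  rw [one_le_div hD, keyR]
  constructor
  · intro h
    have hb : Real.sqrt (x ^ 2 + 2 * Real.pi) ≤ (Real.pi * (κ - 1) + 1) * x := by
      nlinarith
    have hb2 : x ^ 2 + 2 * Real.pi ≤ ((Real.pi * (κ - 1) + 1) * x) ^ 2 := by
      nlinarith [hs.le]
    nlinarith [Real.pi_pos]
  · intro h
    have hb2 : x ^ 2 + 2 * Real.pi ≤ ((Real.pi * (κ - 1) + 1) * x) ^ 2 := by
      nlinarith [Real.pi_pos]
    have hbx : 0 ≤ (Real.pi * (κ - 1) + 1) * x := mul_nonneg (by nlinarith) hx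
    have hb : Real.sqrt (x ^ 2 + 2 * Real.pi) ≤ (Real.pi * (κ - 1) + 1) * x := by
      rw [show x ^ 2 + 2 * Real.pi = ((x ^ 2 + 2 * Real.pi)) from rfl]
      calc Real.sqrt (x ^ 2 + 2 * Real.pi)
          ≤ Real.sqrt (((Real.pi * (κ - 1) + 1) * x) ^ 2) := Real.sqrt_le_sqrt hb2
        _ = (Real.pi * (κ - 1) + 1) * x := Real.sqrt_sq hbx
    nlinarith
end
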